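/- arXiv:2604.01037 — 2 statements merged into one kernel-verified Lean document; each statement's English description precedes it below -/
import Mathlib

section
/- Let A ∈ ℂ^{n×n}, let λ be an eigenvalue with one-dimensional null space of A - λI containing the unit vector v, and let W = [v, W_⊥] ∈ ℂ^{n×m} have full column rank with range(W) containing v. For any Ω ∈ ℂ^{n×m} such that Ωᴴ (A - λI) W_⊥ has rank m-1, the vector e₁ ∈ ℂ^m satisfies Ωᴴ (A - λI) W e₁ = 0 and the null space of the m×m matrix Ωᴴ (A - λI) W is exactly span{e₁}. -/
open Matrix

/-- Euclidean norm of a complex vector. -/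
noncomputable def cenorm {n : ℕ} (x : Fin n → ℂ) : ℝ :=
  ‖(WithLp.equiv 2 (Fin n → ℂ)).symm x‖

/-- The n × (k+1) matrix whose first column is `w` and whose remaining columns are `M`. -/
def aug {n k : ℕ} (w : Fin n → ℂ) (M : Matrix (Fin n) (Fin k) ℂ) :
    Matrix (Fin n) (Fin (k + 1)) ℂ :=
  Matrix.of fun i j => Fin.cases (w i) (fun j' => M i j') j

/-!
Since `(A - μ I) v = 0`, multiplying `Ωᴴ (A - μ I) [v, W]` by `y`
kills the first coordinate and gives `Ωᴴ (A - μ I) W` applied to the tail of `y`. A matrix with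
`k` columns and rank `k` is injective, so the product vanishes exactly when the tail of `y` does,
i.e. when `y` is a multiple of `e₁`.
-/

theorem Matrix.mulVec_injective_of_rank_eq_card {K m n : Type*} [Field K] [Fintype n]
    (M : Matrix m n K) (hM : M.rank = Fintype.card n) : Function.Injective M.mulVec := by
  have hdim := LinearMap.finrank_range_add_finrank_ker M.mulVecLin
  rw [Module.finrank_fintype_fun_eq_card] at hdim
  have hker : LinearMap.ker M.mulVecLin = ⊥ :=
    Submodule.finrank_eq_zero.mp (by rw [← Matrix.rank] at hdim; omega)
  exact LinearMap.ker_eq_bot.mp hker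

theorem exists_eq_smul_single_zero_iff_tail_eq_zero {R : Type*} [MulZeroOneClass R] {k : ℕ}
    (y : Fin (k + 1) → R) : (∃ c : R, y = c • Pi.single 0 1) ↔ Fin.tail y = 0 := by
  constructor
  · rintro ⟨c, rfl⟩
    ext l
    simp [Fin.tail]
  · intro htail
    refine ⟨y 0, funext fun j => Fin.cases (by simp) (fun l => ?_) j⟩
    simpa [Fin.tail] using congrFun htail l

theorem aug_mulVec {n k : ℕ} (w : Fin n → ℂ) (M : Matrix (Fin n) (Fin k) ℂ)
    (y : Fin (k + 1) → ℂ) : aug w M *ᵥ y = y 0 • w + M *ᵥ Fin.tail y := by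
  funext i
  simp [Matrix.mulVec, dotProduct, aug, Fin.sum_univ_succ, Fin.tail, mul_comm]

theorem mul_aug_mulVec_of_mulVec_eq_zero {n k p : ℕ} {B : Matrix (Fin p) (Fin n) ℂ}
    {w : Fin n → ℂ} (hw : B *ᵥ w = 0) (M : Matrix (Fin n) (Fin k) ℂ) (y : Fin (k + 1) → ℂ) :
    (B * aug w M) *ᵥ y = (B * M) *ᵥ Fin.tail y := by
  rw [← mulVec_mulVec, aug_mulVec, mulVec_add, mulVec_smul, hw, smul_zero, zero_add,
    mulVec_mulVec]

theorem stmt_5_general (n k : ℕ) (A : Matrix (Fin n) (Fin n) ℂ) (μ : ℂ)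
    (v : Fin n → ℂ) (hv : (A - μ • 1).mulVec v = 0)
    (W : Matrix (Fin n) (Fin k) ℂ)
    (Ω : Matrix (Fin n) (Fin (k + 1)) ℂ)
    (hΩ : (Ωᴴ * ((A - μ • 1) * W)).rank = k) :
    (Ωᴴ * ((A - μ • 1) * aug v W)).mulVec ((Pi.single 0 1 : Fin (k + 1) → ℂ)) = 0 ∧
    ∀ y : Fin (k + 1) → ℂ,
      (Ωᴴ * ((A - μ • 1) * aug v W)).mulVec y = 0 ↔
        ∃ c : ℂ, y = c • (Pi.single 0 1 : Fin (k + 1) → ℂ) := by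
  have hΩv : (Ωᴴ * (A - μ • 1)) *ᵥ v = 0 := by rw [← mulVec_mulVec, hv, mulVec_zero]
  have hinj : Function.Injective (Ωᴴ * ((A - μ • 1) * W)).mulVec :=
    (Ωᴴ * ((A - μ • 1) * W)).mulVec_injective_of_rank_eq_card (by rw [hΩ, Fintype.card_fin])
  have hkernel : ∀ y : Fin (k + 1) → ℂ, (Ωᴴ * ((A - μ • 1) * aug v W)) *ᵥ y = 0 ↔
      ∃ c : ℂ, y = c • (Pi.single 0 1 : Fin (k + 1) → ℂ) := by
    intro y
    rw [exists_eq_smul_single_zero_iff_tail_eq_zero, ← Matrix.mul_assoc,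
      mul_aug_mulVec_of_mulVec_eq_zero hΩv, Matrix.mul_assoc]
    exact hinj.eq_iff' (mulVec_zero _)
  exact ⟨(hkernel _).mpr ⟨1, (one_smul ℂ _).symm⟩, hkernel⟩

theorem stmt_5 (n k : ℕ) (A : Matrix (Fin n) (Fin n) ℂ) (μ : ℂ)
    (v : Fin n → ℂ) (hv : (A - μ • 1).mulVec v = 0) (hvunit : cenorm v = 1)
    (hker : ∀ z : Fin n → ℂ, (A - μ • 1).mulVec z = 0 → ∃ c : ℂ, z = c • v)
    (W : Matrix (Fin n) (Fin k) ℂ)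
    (hrank : (aug v W).rank = k + 1)
    (Ω : Matrix (Fin n) (Fin (k + 1)) ℂ)
    (hΩ : (Ωᴴ * ((A - μ • 1) * W)).rank = k) :
    (Ωᴴ * ((A - μ • 1) * aug v W)).mulVec ((Pi.single 0 1 : Fin (k + 1) → ℂ)) = 0 ∧
    ∀ y : Fin (k + 1) → ℂ,
      (Ωᴴ * ((A - μ • 1) * aug v W)).mulVec y = 0 ↔
        ∃ c : ℂ, y = c • (Pi.single 0 1 : Fin (k + 1) → ℂ) :=
  stmt_5_general n k A μ v hv W Ω hΩ
end

section
/- Let A(·): D → ℂ^{n×n} be a matrix-valued function, λ an eigenvalue with A(λ)v = 0, v ≠ 0, left eigenvector u with uᴴ A(λ) = 0 and uᴴ A'(λ) v ≠ 0, and let W_⊥ have columns such that A(λ)W_⊥ has rank m-1. Then A'(λ)v ∉ range(A(λ)W_⊥), and consequently the matrix [A'(λ)v, A(λ)W_⊥] ∈ ℂ^{n×m} has rank m. -/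
open Matrix

lemma mulVec_aug {n k : ℕ} (w : Fin n → ℂ) (M : Matrix (Fin n) (Fin k) ℂ)
    (x : Fin (k + 1) → ℂ) :
    (aug w M).mulVec x = x 0 • w + M.mulVec (x ∘ Fin.succ) := by
  funext i
  simp [aug, Matrix.mulVec, dotProduct, Fin.sum_univ_succ, mul_comm]

theorem stmt_6 (n k : ℕ) (Al Ad : Matrix (Fin n) (Fin n) ℂ)
    (v u : Fin n → ℂ) (hv : Al.mulVec v = 0) (hv0 : v ≠ 0)
    (hu : vecMul (star u) Al = 0) (huAv : star u ⬝ᵥ Ad.mulVec v ≠ 0)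
    (W : Matrix (Fin n) (Fin k) ℂ) (hW : (Al * W).rank = k) :
    (¬ ∃ c : Fin k → ℂ, (Al * W).mulVec c = Ad.mulVec v) ∧
    (aug (Ad.mulVec v) (Al * W)).rank = k + 1 := by
  have key : ∀ c : Fin k → ℂ, star u ⬝ᵥ (Al * W).mulVec c = 0 := by
    intro c
    rw [Matrix.dotProduct_mulVec, ← Matrix.vecMul_vecMul, hu, Matrix.zero_vecMul,
      zero_dotProduct]
  have part1 : ¬ ∃ c : Fin k → ℂ, (Al * W).mulVec c = Ad.mulVec v := by
    rintro ⟨c, hc⟩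
    exact huAv (hc ▸ key c)
  have hker : LinearMap.ker (Al * W).mulVecLin = ⊥ := by
    have h1 := LinearMap.finrank_range_add_finrank_ker (Al * W).mulVecLin
    rw [Matrix.rank] at hW
    rw [hW, Module.finrank_fin_fun] at h1
    exact Submodule.finrank_eq_zero.mp (by omega)
  have hinj : Function.Injective (Al * W).mulVecLin := by
    rwa [← LinearMap.ker_eq_bot]
  refine ⟨part1, ?_⟩
  have hker2 : LinearMap.ker (aug (Ad.mulVec v) (Al * W)).mulVecLin = ⊥ := by
    rw [LinearMap.ker_eq_bot']
    intro x hx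
    rw [Matrix.mulVecLin_apply, mulVec_aug] at hx
    have hdot := congrArg (fun y => star u ⬝ᵥ y) hx
    simp only [dotProduct_add, dotProduct_smul, key, add_zero,
      dotProduct_zero, smul_eq_mul] at hdot
    have hx0 : x 0 = 0 := by
      rcases mul_eq_zero.mp hdot with h | h
      · exact h
      · exact absurd h huAv
    rw [hx0, zero_smul, zero_add] at hx
    have hxs : x ∘ Fin.succ = 0 := by
      apply hinj
      simpa [Matrix.mulVecLin_apply] using hx
    funext j
    cases j using Fin.cases with
    | zero => exact hx0
    | succ j' => exact congrFun hxs j'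
  have h2 := LinearMap.finrank_range_add_finrank_ker (aug (Ad.mulVec v) (Al * W)).mulVecLin
  rw [hker2] at h2; simp only [finrank_bot, add_zero, Module.finrank_fin_fun] at h2
  rw [Matrix.rank]
  exact h2
end
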